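/- arXiv:2410.07729 — 2 statements merged into one kernel-verified Lean document; each statement's English description precedes it below -/
import Mathlib

section
/- Let n ≥ 2 be an even integer, c > 0 a real number, and let k be an integer with 1 ≤ k ≤ n/2 - 1. Then for every x ∈ ℂ, ∫₀^∞ e^{-c^{n-1} w^n/n} ( e^{iπ/n} e^{-c w x e^{iπ/n}} - e^{-c w x a_k} cos(c w x b_k - (2k+1)π/n) ) dw = Σ_{j=0}^∞ (-x)^j / j! · ( e^{iπ(j+1)/n} - cos((j+1)(2k+1)π/n) ) · Γ((j+1)/n) · (nc)^{(j+1)/n - 1}, and the series converges for all x ∈ ℂ. -/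
/-!
Expanding `e^{zw}` in its power series and integrating termwise against `e^{-b wⁿ}` (dominated by
`e^{-b wⁿ + |z| w}`, integrable because `n ≥ 2`) gives
`∫₀^∞ e^{-b wⁿ} e^{zw} dw = Σ_j z^j / j! · Γ((j+1)/n) b^{-(j+1)/n} / n`.
With `b = c^{n-1}/n` and `z = -c x C` this expands the kernel `e^{-c^{n-1} wⁿ/n} C e^{-c w x C}`.
The integrand of the theorem is this kernel at `C = e^{iπ/n}` minus the average of the kernels at
`C = e^{∓iθ}`, `θ = (2k+1)π/n`, since
`e^{-u cos θ} cos(u sin θ - θ) = (e^{-iθ} e^{-u e^{-iθ}} + e^{iθ} e^{-u e^{iθ}}) / 2`;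
accordingly the coefficients combine to `e^{iπ(j+1)/n} - cos((j+1)θ)`.
-/

open MeasureTheory Real Set

open Filter Asymptotics in
lemma integrableOn_exp_neg_mul_pow_add_mul {n : ℕ} (hn : 2 ≤ n) {b : ℝ} (hb : 0 < b) (a : ℝ) :
    IntegrableOn (fun w : ℝ => rexp (-b * w ^ n + a * w)) (Ioi 0) := by
  refine integrable_of_isBigO_exp_neg one_pos (by fun_prop) (IsBigO.of_bound 1 ?_)
  filter_upwards [eventually_ge_atTop (max 1 ((a + 1) / b))] with w hw
  have hw1 : 1 ≤ w := le_of_max_le_left hw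
  have hab : a + 1 ≤ b * w := (div_le_iff₀' hb).1 (le_of_max_le_right hw)
  have hpow : (a + 1) * w ≤ b * w ^ n :=
    calc (a + 1) * w ≤ b * w * w := by nlinarith
      _ = b * w ^ 2 := by ring
      _ ≤ b * w ^ n := by gcongr
  rw [norm_of_nonneg (exp_pos _).le, norm_of_nonneg (exp_pos _).le, one_mul]
  exact exp_le_exp.2 (by linarith)

lemma integral_pow_mul_exp_neg_mul_pow {n : ℕ} (hn : 0 < n) {b : ℝ} (hb : 0 < b) (j : ℕ) :
    ∫ w in Ioi (0 : ℝ), w ^ j * rexp (-b * w ^ n) =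
      b ^ (-((j : ℝ) + 1) / n) * (1 / n) * Real.Gamma ((j + 1) / n) := by
  simp_rw [← rpow_natCast]
  exact integral_rpow_mul_exp_neg_mul_rpow (by positivity) (by linarith [j.cast_nonneg (α := ℝ)]) hb

lemma pow_mul_rpow_pow_div_eq_mul_rpow {n : ℕ} (hn : 0 < n) {c : ℝ} (hc : 0 < c) (j : ℕ) :
    c ^ j * ((c ^ (n - 1) / n) ^ (-((j : ℝ) + 1) / n) * (1 / n)) =
      (n * c) ^ (((j : ℝ) + 1) / n - 1) := by
  have hn' : (0 : ℝ) < n := by exact_mod_cast hn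
  refine log_injOn_pos (mem_Ioi.2 (by positivity)) (mem_Ioi.2 (by positivity)) ?_
  rw [log_mul (by positivity) (by positivity), log_mul (by positivity) (by positivity),
    log_rpow (by positivity), log_rpow (by positivity), log_div (by positivity) hn'.ne',
    log_mul hn'.ne' hc.ne', log_pow, log_pow, one_div, log_inv]
  push_cast [Nat.cast_sub hn]
  field_simp
  ring

open Complex Nat

lemma norm_cexp_neg_mul_pow (b w : ℝ) (n : ℕ) : ‖cexp (-b * w ^ n)‖ = rexp (-b * w ^ n) := by
  rw [← norm_exp_ofReal]; push_cast; rfl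

lemma integrableOn_cexp_neg_mul_pow_mul_cexp {n : ℕ} (hn : 2 ≤ n) {b : ℝ} (hb : 0 < b) (z : ℂ) :
    IntegrableOn (fun w : ℝ => cexp (-b * w ^ n) * cexp (z * w)) (Ioi 0) := by
  refine (integrableOn_exp_neg_mul_pow_add_mul hn hb z.re).mono' (by fun_prop)
    (ae_of_all _ fun w => le_of_eq ?_)
  rw [norm_mul, norm_cexp_neg_mul_pow, Complex.norm_exp, Real.exp_add, re_mul_ofReal]

theorem hasSum_integral_cexp_neg_mul_pow_mul_cexp {n : ℕ} (hn : 2 ≤ n) {b : ℝ} (hb : 0 < b)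
    (z : ℂ) :
    HasSum (fun j : ℕ => z ^ j / j ! *
        ((b ^ (-((j : ℝ) + 1) / n) * (1 / n) * Real.Gamma ((j + 1) / n) : ℝ) : ℂ))
      (∫ w in Ioi (0 : ℝ), cexp (-b * w ^ n) * cexp (z * w)) := by
  set F : ℕ → ℝ → ℂ := fun j w => cexp (-b * w ^ n) * ((z * w) ^ j / j !)
  have hF_integral : ∀ j, ∫ w in Ioi 0, F j w =
      z ^ j / j ! * ((b ^ (-((j : ℝ) + 1) / n) * (1 / n) * Real.Gamma ((j + 1) / n) : ℝ) : ℂ) := by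
    intro j
    rw [← integral_pow_mul_exp_neg_mul_pow (by omega : 0 < n) hb, ← integral_complex_ofReal,
      ← integral_const_mul]
    refine integral_congr_ae (ae_of_all _ fun w => ?_)
    simp only [F]
    push_cast
    ring
  have hF_norm : ∀ j, ∀ w ∈ Ioi (0 : ℝ), ‖F j w‖ = rexp (-b * w ^ n) * ((‖z‖ * w) ^ j / j !) := by
    intro j w hw
    simp only [F]
    rw [norm_mul, norm_cexp_neg_mul_pow, norm_div, norm_pow, norm_mul, norm_real,
      norm_of_nonneg (le_of_lt hw), Complex.norm_natCast]
  simp_rw [← hF_integral]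
  refine hasSum_integral_of_dominated_convergence (fun j w => ‖F j w‖) (fun j => by fun_prop)
    (fun j => ae_of_all _ fun w => le_rfl) ?_ ?_ ?_
  · refine ae_restrict_of_forall_mem measurableSet_Ioi fun w hw => ?_
    simp_rw [hF_norm _ w hw]
    exact (summable_pow_div_factorial _).mul_left _
  · refine (integrableOn_exp_neg_mul_pow_add_mul hn hb ‖z‖).congr_fun (fun w hw => ?_)
      measurableSet_Ioi
    simp_rw [hF_norm _ w hw, tsum_mul_left, Real.exp_add,
      (NormedSpace.expSeries_div_hasSum_exp (‖z‖ * w)).tsum_eq, Real.exp_eq_exp_ℝ]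
  · refine ae_of_all _ fun w => ?_
    have h := NormedSpace.expSeries_div_hasSum_exp (z * w)
    rw [← Complex.exp_eq_exp_ℂ] at h
    exact h.mul_left _

noncomputable def airyKernel (n : ℕ) (c : ℝ) (x C : ℂ) (w : ℝ) : ℂ :=
  cexp (-(c : ℂ) ^ (n - 1) * (w : ℂ) ^ n / n) * (C * cexp (-(c : ℂ) * w * x * C))

lemma airyKernel_eq (n : ℕ) (c : ℝ) (x C : ℂ) :
    airyKernel n c x C =
      fun w : ℝ => C * (cexp (-↑(c ^ (n - 1) / n) * w ^ n) * cexp (-c * x * C * w)) := by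
  funext w
  rw [airyKernel, mul_left_comm]
  congr 3 <;> push_cast <;> ring

lemma integrableOn_airyKernel {n : ℕ} (hn : 2 ≤ n) {c : ℝ} (hc : 0 < c) (x C : ℂ) :
    IntegrableOn (airyKernel n c x C) (Ioi 0) := by
  rw [airyKernel_eq]
  exact (integrableOn_cexp_neg_mul_pow_mul_cexp hn (by positivity) _).const_mul C

theorem hasSum_integral_airyKernel {n : ℕ} (hn : 2 ≤ n) {c : ℝ} (hc : 0 < c) (x C : ℂ) :
    HasSum (fun j : ℕ => (-x) ^ j / j ! * C ^ (j + 1) * (Real.Gamma ((j + 1) / n) : ℂ) *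
        (((n * c) ^ (((j : ℝ) + 1) / n - 1) : ℝ) : ℂ))
      (∫ w in Ioi (0 : ℝ), airyKernel n c x C w) := by
  rw [airyKernel_eq, integral_const_mul]
  refine ((hasSum_integral_cexp_neg_mul_pow_mul_cexp hn (b := c ^ (n - 1) / n) (by positivity)
    (-c * x * C)).mul_left C).congr_fun fun j => ?_
  rw [← pow_mul_rpow_pow_div_eq_mul_rpow (by omega) hc j]
  push_cast
  ring

lemma ofReal_cos_nat_mul_eq_pow_add_pow (m : ℕ) (θ : ℝ) :
    ((Real.cos (m * θ) : ℝ) : ℂ) = (cexp (-θ * I) ^ m + cexp (θ * I) ^ m) / 2 := by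
  rw [← Complex.exp_nat_mul, ← Complex.exp_nat_mul, ofReal_cos, Complex.cos, add_comm]
  push_cast
  ring_nf

lemma cexp_neg_mul_cos_mul_cos_sub (u : ℂ) (θ : ℝ) :
    cexp (-u * Real.cos θ) * Complex.cos (u * Real.sin θ - θ) =
      (cexp (-θ * I) * cexp (-u * cexp (-θ * I)) + cexp (θ * I) * cexp (-u * cexp (θ * I))) / 2 := by
  rw [Complex.cos, mul_div_assoc', mul_add, ← Complex.exp_add, ← Complex.exp_add,
    ← Complex.exp_add, ← Complex.exp_add, Complex.exp_mul_I, Complex.exp_mul_I, Complex.cos_neg,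
    Complex.sin_neg, ← ofReal_cos, ← ofReal_sin]
  congr 3 <;> ring

theorem airy_type_power_series_y_plus_even_general
    (n : ℕ) (hn : 2 ≤ n) (c : ℝ) (hc : 0 < c)
    (k : ℕ) (x : ℂ) :
    HasSum
      (fun j : ℕ =>
        (-x) ^ j / (Nat.factorial j) *
          (Complex.exp (Complex.I * π * ((j : ℂ) + 1) / n)
            - (Real.cos (((j : ℝ) + 1) * ((2 * k + 1) * π / n)) : ℝ)) *
          (Real.Gamma (((j : ℝ) + 1) / n) : ℝ) *
          ((((n : ℝ) * c) ^ (((j : ℝ) + 1) / n - 1) : ℝ) : ℂ))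
      (∫ w in Ioi (0 : ℝ),
        Complex.exp (-(c : ℂ) ^ (n - 1) * (w : ℂ) ^ n / n) *
          (Complex.exp (Complex.I * π / n) *
              Complex.exp (-(c : ℂ) * w * x * Complex.exp (Complex.I * π / n))
            - Complex.exp (-(c : ℂ) * w * x * (Real.cos ((2 * k + 1) * π / n) : ℝ)) *
              Complex.cos ((c : ℂ) * w * x * (Real.sin ((2 * k + 1) * π / n) : ℝ)
                - ((2 * k + 1) * π / n : ℝ)))) := by
  set θ : ℝ := (2 * k + 1) * π / n
  set A := cexp (I * π / n)
  have hseries := hasSum_integral_airyKernel hn hc x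
  have hint := integrableOn_airyKernel hn hc x
  have key := (hseries A).sub (((hseries (cexp (-θ * I))).add (hseries (cexp (θ * I)))).div_const 2)
  rw [← integral_add (hint _) (hint _), ← integral_div, ← integral_sub (hint _)] at key
  swap
  · exact ((hint _).add (hint _)).div_const 2
  refine (congrArg (HasSum _) ?_).mpr (key.congr_fun fun j => ?_)
  · congr 1
    funext w
    simp only [airyKernel, show ∀ C : ℂ, -(c : ℂ) * w * x * C = -(c * w * x) * C by intro; ring]
    rw [cexp_neg_mul_cos_mul_cos_sub]
    ring
  · have hA : cexp (I * π * ((j : ℂ) + 1) / n) = A ^ (j + 1) := by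
      rw [← Complex.exp_nat_mul]; push_cast; ring_nf
    have hcos := ofReal_cos_nat_mul_eq_pow_add_pow (j + 1) θ
    rw [Nat.cast_succ] at hcos
    rw [hA, hcos]
    ring

theorem airy_type_power_series_y_plus_even
    (n : ℕ) (hn : 2 ≤ n) (hne : Even n) (c : ℝ) (hc : 0 < c)
    (k : ℕ) (hk1 : 1 ≤ k) (hk2 : k ≤ n / 2 - 1) (x : ℂ) :
    HasSum
      (fun j : ℕ =>
        (-x) ^ j / (Nat.factorial j) *
          (Complex.exp (Complex.I * π * ((j : ℂ) + 1) / n)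
            - (Real.cos (((j : ℝ) + 1) * ((2 * k + 1) * π / n)) : ℝ)) *
          (Real.Gamma (((j : ℝ) + 1) / n) : ℝ) *
          ((((n : ℝ) * c) ^ (((j : ℝ) + 1) / n - 1) : ℝ) : ℂ))
      (∫ w in Ioi (0 : ℝ),
        Complex.exp (-(c : ℂ) ^ (n - 1) * (w : ℂ) ^ n / n) *
          (Complex.exp (Complex.I * π / n) *
              Complex.exp (-(c : ℂ) * w * x * Complex.exp (Complex.I * π / n))
            - Complex.exp (-(c : ℂ) * w * x * (Real.cos ((2 * k + 1) * π / n) : ℝ)) *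
              Complex.cos ((c : ℂ) * w * x * (Real.sin ((2 * k + 1) * π / n) : ℝ)
                - ((2 * k + 1) * π / n : ℝ)))) :=
  airy_type_power_series_y_plus_even_general n hn c hc k x
end

section
/- Let n ≥ 2 be an even integer, c > 0 a real number, and let k be an integer with 0 ≤ k ≤ n/2 - 1. Then for every x ∈ ℂ, -∫₀^∞ e^{-c^{n-1} w^n/n - c w x a_k} sin(c w x b_k - (2k+1)π/n) dw = Σ_{j=0}^∞ (-x)^j / j! · sin((j+1)(2k+1)π/n) · Γ((j+1)/n) · (nc)^{(j+1)/n - 1}, and the series converges for all x ∈ ℂ. -/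
/-!
With `u = exp (θ i)`, the exponential series of `u exp (-z u)` and `ū exp (-z ū)` give
`-exp (-z cos θ) sin (z sin θ - θ) = ∑ (-z)^j / j! · sin ((j + 1) θ)` for every complex `z`.
Put `z = c w x`, multiply by `exp (-b wⁿ)` with `b = cⁿ⁻¹ / n` and integrate term by term: the
moments `∫₀^∞ wʲ exp (-b wⁿ) dw = b^(-(j+1)/n) Γ((j+1)/n) / n` produce the coefficients. The
interchange is dominated convergence, the sum of the absolute values of the terms being at most
`exp (c ‖x‖ w - b wⁿ)`, which is integrable on `(0, ∞)` because `n ≥ 2`.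
-/

open MeasureTheory Real Set
open scoped Nat

theorem integrableOn_exp_mul_sub_mul_pow {n : ℕ} (hn : 2 ≤ n) (r : ℝ) {b : ℝ} (hb : 0 < b) :
    IntegrableOn (fun w : ℝ => rexp (r * w - b * w ^ n)) (Ioi 0) := by
  have hgauss : Integrable (fun w : ℝ => rexp b * rexp (-b * w ^ 2 + r * w)) := by
    refine Integrable.const_mul ?_ _
    convert (integrable_cexp_quadratic (b := (b : ℂ)) (by simpa using hb) r 0).norm using 2
    rw [Complex.norm_exp]
    simp [← Complex.ofReal_pow]
  refine hgauss.integrableOn.mono' (by fun_prop)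
    (ae_restrict_of_forall_mem measurableSet_Ioi fun w (hw : 0 < w) => ?_)
  -- `wⁿ ≥ w² - 1` makes the integrand `≤ exp b · exp (-b w² + r w)`
  have hpow : w ^ 2 - 1 ≤ w ^ n := by
    rcases le_total w 1 with hw1 | hw1
    · nlinarith [pow_pos hw n]
    · linarith [pow_le_pow_right₀ hw1 hn]
  rw [norm_of_nonneg (exp_pos _).le, ← Real.exp_add]
  gcongr
  nlinarith

theorem hasSum_neg_pow_div_factorial_mul_sin (z : ℂ) (θ : ℝ) :
    HasSum (fun j : ℕ => (-z) ^ j / j ! * (Real.sin ((j + 1) * θ) : ℂ))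
      (-(Complex.exp (-(z * Real.cos θ)) * Complex.sin (z * Real.sin θ - θ))) := by
  have hexp (y : ℂ) : HasSum (fun j : ℕ => y ^ j / j !) (Complex.exp y) :=
    Complex.exp_eq_exp_ℂ ▸ NormedSpace.expSeries_div_hasSum_exp y
  have hpow (j : ℕ) (s : ℝ) : Complex.exp (s * Complex.I) * Complex.exp (s * Complex.I) ^ j =
      Complex.exp ((j + 1) * s * Complex.I) := by
    rw [← Complex.exp_nat_mul, ← Complex.exp_add]; ring_nf
  have hrot (s : ℝ) : Complex.exp (s * Complex.I) * Complex.exp (-z * Complex.exp (s * Complex.I)) =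
      Complex.exp (-(z * Real.cos s)) * Complex.exp (-(z * Real.sin s - s) * Complex.I) := by
    rw [← Complex.exp_add, ← Complex.exp_add, Complex.exp_mul_I]; push_cast; ring_nf
  have hval : -(Complex.exp (-(z * Real.cos θ)) * Complex.sin (z * Real.sin θ - θ)) =
      Complex.I / 2 *
        (Complex.exp (↑(-θ) * Complex.I) * Complex.exp (-z * Complex.exp (↑(-θ) * Complex.I)) -
          Complex.exp (θ * Complex.I) * Complex.exp (-z * Complex.exp (θ * Complex.I))) := by
    rw [hrot, hrot, Complex.sin, Real.cos_neg, Real.sin_neg]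
    push_cast
    ring_nf
  rw [hval]
  refine (((hexp _).mul_left _).sub ((hexp _).mul_left _)).mul_left _ |>.congr_fun fun j => ?_
  rw [Complex.ofReal_sin, Complex.sin, mul_pow, mul_pow]
  linear_combination (norm := skip) -((-z) ^ j / j ! * Complex.I / 2) * (hpow j (-θ) - hpow j θ)
  push_cast
  ring_nf

theorem pow_mul_integral_pow_mul_exp_neg_pow {n : ℕ} (hn : 0 < n) {c : ℝ} (hc : 0 < c) (j : ℕ) :
    c ^ j * ∫ w in Ioi (0:ℝ), w ^ j * rexp (-(c ^ (n - 1) / n) * w ^ n)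
      = Gamma ((j + 1) / n) * (n * c) ^ ((j + 1 : ℝ) / n - 1) := by
  have hn' : (0 : ℝ) < n := by exact_mod_cast hn
  have hb : 0 < c ^ (n - 1) / n := by positivity
  have h := integral_rpow_mul_exp_neg_mul_rpow (q := j) hn'
    (by linarith [j.cast_nonneg (α := ℝ)]) hb
  simp only [rpow_natCast] at h
  have hscale : c ^ j * ((c ^ (n - 1) / n) ^ (-((j : ℝ) + 1) / n) * (1 / n))
      = (n * c) ^ ((j + 1 : ℝ) / n - 1) := by
    apply log_injOn_pos (mem_Ioi.2 (by positivity)) (mem_Ioi.2 (by positivity))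
    rw [log_mul (by positivity) (by positivity), log_mul (by positivity) (by positivity),
      log_rpow hb, log_rpow (by positivity), log_div (by positivity) hn'.ne', log_pow, log_pow,
      log_mul hn'.ne' hc.ne', one_div, log_inv, Nat.cast_sub hn]
    field_simp
    ring
  rw [h, ← hscale]
  ring

theorem hasSum_integral_mul_pow_mul_exp_neg_mul_pow {n : ℕ} (hn : 2 ≤ n) {b : ℝ} (hb : 0 < b)
    (a : ℕ → ℂ) (r : ℝ) (ha : ∀ j, ‖a j‖ ≤ r ^ j / j !) :
    HasSum (fun j => a j * ↑(∫ w in Ioi (0:ℝ), w ^ j * rexp (-b * w ^ n)))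
      (∫ w in Ioi (0:ℝ), ∑' j, a j * ↑(w ^ j * rexp (-b * w ^ n))) := by
  set bound : ℕ → ℝ → ℝ := fun j w => (r * w) ^ j / j ! * rexp (-b * w ^ n)
  have hbound (w : ℝ) : HasSum (bound · w) (rexp (r * w - b * w ^ n)) := by
    rw [sub_eq_add_neg, Real.exp_add, ← neg_mul]
    exact (Real.exp_eq_exp_ℝ ▸ NormedSpace.expSeries_div_hasSum_exp (r * w)).mul_right _
  have hle (j : ℕ) (w : ℝ) (hw : w ∈ Ioi 0) :
      ‖a j * ↑(w ^ j * rexp (-b * w ^ n))‖ ≤ bound j w := by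
    have hw : 0 < w := hw
    calc ‖a j * ↑(w ^ j * rexp (-b * w ^ n))‖ = ‖a j‖ * (w ^ j * rexp (-b * w ^ n)) := by
          rw [norm_mul, Complex.norm_real, norm_of_nonneg (by positivity)]
      _ ≤ r ^ j / j ! * (w ^ j * rexp (-b * w ^ n)) := by gcongr; exact ha j
      _ = bound j w := by simp only [bound]; ring
  have hterm (j : ℕ) : a j * ↑(∫ w in Ioi (0:ℝ), w ^ j * rexp (-b * w ^ n)) =
      ∫ w in Ioi (0:ℝ), a j * ↑(w ^ j * rexp (-b * w ^ n)) := by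
    rw [integral_const_mul, integral_complex_ofReal]
  refine HasSum.congr_fun ?_ hterm
  refine hasSum_integral_of_dominated_convergence bound (fun j => by fun_prop)
    (fun j => ae_restrict_of_forall_mem measurableSet_Ioi (hle j))
    (ae_of_all _ fun w => (hbound w).summable) ?_
    (ae_restrict_of_forall_mem measurableSet_Ioi fun w hw =>
      (Summable.of_norm_bounded (hbound w).summable (fun j => hle j w hw)).hasSum)
  simp_rw [fun w => (hbound w).tsum_eq]
  exact integrableOn_exp_mul_sub_mul_pow hn r hb

theorem hasSum_neg_integral_exp_mul_sin {n : ℕ} (hn : 2 ≤ n) {c : ℝ} (hc : 0 < c) (θ : ℝ)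
    (x : ℂ) :
    HasSum (fun j : ℕ => (-x) ^ j / j ! * (Real.sin ((j + 1) * θ) : ℂ) *
        (Gamma ((j + 1) / n) : ℂ) * (((n * c) ^ ((j + 1 : ℝ) / n - 1) : ℝ) : ℂ))
      (-∫ w in Ioi (0 : ℝ), Complex.exp (-(c : ℂ) ^ (n - 1) * (w : ℂ) ^ n / n
          - c * w * x * Real.cos θ) * Complex.sin (c * w * x * Real.sin θ - θ)) := by
  set b := c ^ (n - 1) / n
  have hb : 0 < b := by positivity
  set a : ℕ → ℂ := fun j => (-(c * x)) ^ j / j ! * (Real.sin ((j + 1) * θ) : ℂ)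
  have ha (j : ℕ) : ‖a j‖ ≤ (c * ‖x‖) ^ j / j ! := by
    simp only [a, norm_mul, norm_div, norm_pow, norm_neg, Complex.norm_real, Complex.norm_natCast,
      Real.norm_eq_abs, abs_of_pos hc]
    exact mul_le_of_le_one_right (by positivity) (abs_sin_le_one _)
  have hcoef (j : ℕ) : (-x) ^ j / j ! * (Real.sin ((j + 1) * θ) : ℂ) *
        (Gamma ((j + 1) / n) : ℂ) * (((n * c) ^ ((j + 1 : ℝ) / n - 1) : ℝ) : ℂ) =
      a j * ↑(∫ w in Ioi (0:ℝ), w ^ j * rexp (-b * w ^ n)) := by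
    have h := congrArg (fun t : ℝ => (t : ℂ))
      (pow_mul_integral_pow_mul_exp_neg_pow (n := n) (by omega) hc j)
    simp only [Complex.ofReal_mul, Complex.ofReal_pow] at h
    simp only [a, b]
    linear_combination -(-x) ^ j / j ! * (Real.sin ((j + 1) * θ) : ℂ) * h
  have hsum (w : ℝ) : ∑' j, a j * ↑(w ^ j * rexp (-b * w ^ n)) =
      -(Complex.exp (-(c : ℂ) ^ (n - 1) * (w : ℂ) ^ n / n - c * w * x * Real.cos θ) *
        Complex.sin (c * w * x * Real.sin θ - θ)) := by
    have hexp : (rexp (-b * w ^ n) : ℂ) * Complex.exp (-(c * w * x * Real.cos θ)) =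
        Complex.exp (-(c : ℂ) ^ (n - 1) * (w : ℂ) ^ n / n - c * w * x * Real.cos θ) := by
      rw [Complex.ofReal_exp, ← Complex.exp_add]
      simp only [b]
      push_cast
      ring_nf
    rw [← hexp, mul_assoc, ← mul_neg]
    refine (((hasSum_neg_pow_div_factorial_mul_sin (c * w * x) θ).mul_left
      (rexp (-b * w ^ n) : ℂ)).congr_fun fun j => ?_).tsum_eq
    simp only [a]
    push_cast
    ring
  have h := hasSum_integral_mul_pow_mul_exp_neg_mul_pow hn hb a _ ha
  simp_rw [hsum, integral_neg] at h
  exact h.congr_fun hcoef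

theorem airy_type_power_series_y_minus_even_general
    (n : ℕ) (hn : 2 ≤ n) (c : ℝ) (hc : 0 < c)
    (k : ℕ) (x : ℂ) :
    HasSum
      (fun j : ℕ =>
        (-x) ^ j / (Nat.factorial j) *
          (Real.sin (((j : ℝ) + 1) * ((2 * k + 1) * π / n)) : ℝ) *
          (Real.Gamma (((j : ℝ) + 1) / n) : ℝ) *
          ((((n : ℝ) * c) ^ (((j : ℝ) + 1) / n - 1) : ℝ) : ℂ))
      (-∫ w in Ioi (0 : ℝ),
        Complex.exp (-(c : ℂ) ^ (n - 1) * (w : ℂ) ^ n / n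
            - (c : ℂ) * w * x * (Real.cos ((2 * k + 1) * π / n) : ℝ)) *
          Complex.sin ((c : ℂ) * w * x * (Real.sin ((2 * k + 1) * π / n) : ℝ)
            - ((2 * k + 1) * π / n : ℝ))) :=
  hasSum_neg_integral_exp_mul_sin hn hc _ x

theorem airy_type_power_series_y_minus_even
    (n : ℕ) (hn : 2 ≤ n) (hne : Even n) (c : ℝ) (hc : 0 < c)
    (k : ℕ) (hk2 : k ≤ n / 2 - 1) (x : ℂ) :
    HasSum
      (fun j : ℕ =>
        (-x) ^ j / (Nat.factorial j) *
          (Real.sin (((j : ℝ) + 1) * ((2 * k + 1) * π / n)) : ℝ) *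
          (Real.Gamma (((j : ℝ) + 1) / n) : ℝ) *
          ((((n : ℝ) * c) ^ (((j : ℝ) + 1) / n - 1) : ℝ) : ℂ))
      (-∫ w in Ioi (0 : ℝ),
        Complex.exp (-(c : ℂ) ^ (n - 1) * (w : ℂ) ^ n / n
            - (c : ℂ) * w * x * (Real.cos ((2 * k + 1) * π / n) : ℝ)) *
          Complex.sin ((c : ℂ) * w * x * (Real.sin ((2 * k + 1) * π / n) : ℝ)
            - ((2 * k + 1) * π / n : ℝ))) :=
  airy_type_power_series_y_minus_even_general n hn c hc k x
end
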